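/- Kershaw's inequality: for all x > 0 and 0 < r < 1, Γ(x+1)/Γ(x+r) > (x + r/2)^{1−r}. -/

import Mathlib

/-!
Let `G(y) = log Γ(y+1) - log Γ(y+r) - (1-r) log (y + r/2)`. By the functional equation,
`G(y+1) < G(y)` becomes `g(m/2) < m g(1/2)` for `g(t) = log (c+t) - log (c-t)`, where
`c = y + (1+r)/2` and `m = 1 - r`; this holds because `g` is strictly convex on `[0, c)` and
`g(0) = 0`. Log-convexity of `Γ` bounds `G(y)` below by `(1-r) log (y / (y + r/2))`, which tends
to `0`, so `G(x) > G(x+1) ≥ 0`.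
-/

open Real Set Filter Topology

lemma hasDerivAt_log_add_sub_log_sub {c t : ℝ} (hp : c + t ≠ 0) (hm : c - t ≠ 0) :
    HasDerivAt (fun s => log (c + s) - log (c - s)) (1 / (c + t) + 1 / (c - t)) t := by
  have hadd : HasDerivAt (fun s => log (c + s)) (1 / (c + t)) t := by
    simpa using ((hasDerivAt_id t).const_add c).log hp
  have hsub : HasDerivAt (fun s => log (c - s)) (-(1 / (c - t))) t := by
    simpa [neg_div] using ((hasDerivAt_id t).const_sub c).log hm
  exact (hadd.sub hsub).congr_deriv (by ring)

lemma strictConvexOn_log_add_sub_log_sub (c : ℝ) :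
    StrictConvexOn ℝ (Ico 0 c) (fun t => log (c + t) - log (c - t)) := by
  refine StrictMonoOn.strictConvexOn_of_deriv (convex_Ico 0 c) ?_ ?_
  · refine ContinuousOn.sub (ContinuousOn.log (by fun_prop) ?_) (ContinuousOn.log (by fun_prop) ?_)
    all_goals intro t ht; simp only [mem_Ico] at ht; linarith
  · rw [interior_Ico]
    intro s ⟨hs0, hsc⟩ t ⟨ht0, htc⟩ hst
    rw [(hasDerivAt_log_add_sub_log_sub (by linarith) (by linarith)).deriv,
      (hasDerivAt_log_add_sub_log_sub (by linarith) (by linarith)).deriv,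
      div_add_div _ _ (by linarith) (by linarith), div_add_div _ _ (by linarith) (by linarith),
      div_lt_div_iff₀ (by nlinarith) (by nlinarith)]
    -- the derivative is `2c / (c² - t²)`
    nlinarith [mul_lt_mul_of_pos_left (mul_self_lt_mul_self hs0.le hst) (by linarith : 0 < c)]

lemma log_add_mul_sub_log_sub_mul_lt {c t m : ℝ} (ht : 0 < t) (htc : t < c) (hm0 : 0 < m)
    (hm1 : m < 1) : log (c + m * t) - log (c - m * t) < m * (log (c + t) - log (c - t)) := by
  have h := (strictConvexOn_log_add_sub_log_sub c).2 (show (0 : ℝ) ∈ Ico 0 c from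
    ⟨le_rfl, ht.trans htc⟩) (show t ∈ Ico 0 c from ⟨ht.le, htc⟩) ht.ne
    (show 0 < 1 - m by linarith) hm0 (by ring)
  simpa using h

lemma log_Gamma_add_le {y s : ℝ} (hy : 0 < y) (hs0 : 0 ≤ s) (hs1 : s ≤ 1) :
    log (Gamma (y + s)) ≤ log (Gamma (y + 1)) - (1 - s) * log y := by
  have h := convexOn_log_Gamma.2 (mem_Ioi.mpr hy) (mem_Ioi.mpr (by linarith : (0 : ℝ) < y + 1))
    (by linarith : (0 : ℝ) ≤ 1 - s) hs0 (by ring)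
  simp only [smul_eq_mul, Function.comp_apply,
    show (1 - s) * y + s * (y + 1) = y + s by ring] at h
  rw [Gamma_add_one hy.ne', log_mul hy.ne' (Gamma_pos_of_pos hy).ne'] at h ⊢
  linarith

noncomputable def kershawGap (r y : ℝ) : ℝ :=
  log (Gamma (y + 1)) - log (Gamma (y + r)) - (1 - r) * log (y + r / 2)

lemma kershawGap_pos_iff {r y : ℝ} (hy : 0 < y) (hr : 0 ≤ r) :
    0 < kershawGap r y ↔ (y + r / 2) ^ (1 - r) < Gamma (y + 1) / Gamma (y + r) := by
  have hΓ1 := Gamma_pos_of_pos (by linarith : 0 < y + 1)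
  have hΓr := Gamma_pos_of_pos (by linarith : 0 < y + r)
  rw [← log_lt_log_iff (by positivity) (div_pos hΓ1 hΓr), log_rpow (by positivity),
    log_div hΓ1.ne' hΓr.ne', kershawGap]
  constructor <;> intro h <;> linarith

lemma kershawGap_add_one_lt {r y : ℝ} (hr0 : 0 < r) (hr1 : r < 1) (hy : 0 < y) :
    kershawGap r (y + 1) < kershawGap r y := by
  have h := log_add_mul_sub_log_sub_mul_lt (c := y + (1 + r) / 2) (t := 1 / 2) (m := 1 - r)
    one_half_pos (by linarith) (by linarith) (by linarith)
  rw [show y + (1 + r) / 2 + (1 - r) * (1 / 2) = y + 1 by ring,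
    show y + (1 + r) / 2 - (1 - r) * (1 / 2) = y + r by ring,
    show y + (1 + r) / 2 + 1 / 2 = y + 1 + r / 2 by ring,
    show y + (1 + r) / 2 - 1 / 2 = y + r / 2 by ring] at h
  have hΓ1 := Gamma_pos_of_pos (by linarith : 0 < y + 1)
  have hΓr := Gamma_pos_of_pos (by linarith : 0 < y + r)
  unfold kershawGap
  rw [Gamma_add_one (s := y + 1) (by linarith), add_right_comm, Gamma_add_one (s := y + r) (by linarith),
    log_mul (by linarith) hΓ1.ne', log_mul (by linarith) hΓr.ne']
  linarith

lemma mul_log_sub_log_le_kershawGap {r y : ℝ} (hy : 0 < y) (hr0 : 0 ≤ r) (hr1 : r ≤ 1) :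
    (1 - r) * (log y - log (y + r / 2)) ≤ kershawGap r y := by
  have h := log_Gamma_add_le hy hr0 hr1
  unfold kershawGap
  linarith

lemma pos_of_add_one_lt_of_tendsto_le {f g : ℝ → ℝ} {x : ℝ} (hstep : ∀ y ≥ x, f (y + 1) < f y)
    (hle : ∀ y ≥ x, g y ≤ f y) (hg : Tendsto g atTop (𝓝 0)) : 0 < f x := by
  have hanti : Antitone fun n : ℕ => f (x + 1 + n) := by
    refine antitone_nat_of_succ_le fun n => ?_
    simpa [add_assoc] using (hstep (x + 1 + n) (by linarith [n.cast_nonneg (α := ℝ)])).le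
  have hlim : Tendsto (fun n : ℕ => g (x + 1 + n)) atTop (𝓝 0) :=
    hg.comp (tendsto_atTop_add_const_left _ _ tendsto_natCast_atTop_atTop)
  have hnonneg : 0 ≤ f (x + 1) :=
    le_of_tendsto' hlim fun n => (hle _ (by linarith [n.cast_nonneg (α := ℝ)])).trans (by simpa using hanti n.zero_le)
  exact hnonneg.trans_lt (hstep x le_rfl)

theorem stmt6 (x r : ℝ) (hx : 0 < x) (hr0 : 0 < r) (hr1 : r < 1) :
    Real.Gamma (x + 1) / Real.Gamma (x + r) > (x + r / 2) ^ (1 - r) := by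
  have hlim : Tendsto (fun y => (1 - r) * (log y - log (y + r / 2))) atTop (𝓝 0) := by
    have h := (tendsto_log_comp_add_sub_log (r / 2)).const_mul (r - 1)
    rw [mul_zero] at h
    exact h.congr fun y => by ring
  refine (kershawGap_pos_iff hx hr0.le).1 (pos_of_add_one_lt_of_tendsto_le ?_ ?_ hlim)
  · exact fun y hy => kershawGap_add_one_lt hr0 hr1 (hx.trans_le hy)
  · exact fun y hy => mul_log_sub_log_le_kershawGap (hx.trans_le hy) hr0.le hr1.le
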